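/- Let f = (f₁,f₂) : ℝ² → ℝ² be a C² vector field compactly supported in 𝔻. Then for all x ∈ ℝ²: (D_u D_v T_α f)(x) = −(∂̃₁f₁)(x) − (∂̃₂f₂)(x), where ∂̃₁ = −(1+α)u₁u₂∂₁ + (1−α)u₂²∂₂ and ∂̃₂ = (1−α)u₁²∂₁ − (1+α)u₁u₂∂₂. -/

import Mathlib

/-!
On a ray, the fundamental theorem of calculus gives `∫₀^∞ D_w g(x + t w) dt = -g(x)` for a
compactly supported `C¹` function `g`, and the ray integral can be differentiated under the
integral sign. Writing `a = u⊥·f` and `b = v⊥·f`, so that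
`T_α f = -∫₀^∞ a(· + t u) + α ∫₀^∞ b(· + t v)`, this gives
`D_v T_α f = -∫₀^∞ (D_v a)(· + t u) - α b`, and then `D_u D_v T_α f = D_v a - α D_u b`.
Expanding `D_u`, `D_v` and `a`, `b` in coordinates yields `-∂̃₁f₁ - ∂̃₂f₂`.
-/

open MeasureTheory Set Filter Metric Topology

noncomputable section

/-- Euclidean dot product on `ℝ × ℝ`. -/
def dot (a b : ℝ × ℝ) : ℝ := a.1 * b.1 + a.2 * b.2

/-- Rotation by `π/2`: `w⊥ = (−w₂, w₁)`. -/
def perp (w : ℝ × ℝ) : ℝ × ℝ := (-w.2, w.1)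

/-- The open unit disc in `ℝ²`. -/
def disc : Set (ℝ × ℝ) := {p : ℝ × ℝ | p.1 ^ 2 + p.2 ^ 2 < 1}

/-- Directional derivative along a constant vector `w`. -/
def Dc (w : ℝ × ℝ) (F : ℝ × ℝ → ℝ) (x : ℝ × ℝ) : ℝ := fderiv ℝ F x w

/-- The tilde partial derivative `∂̃₁ = −(1+α)u₁u₂∂₁ + (1−α)u₂²∂₂`. -/
def pt1 (α u₁ u₂ : ℝ) (g : ℝ × ℝ → ℝ) (x : ℝ × ℝ) : ℝ :=
  -(1 + α) * u₁ * u₂ * fderiv ℝ g x (1, 0) + (1 - α) * u₂ ^ 2 * fderiv ℝ g x (0, 1)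

/-- The tilde partial derivative `∂̃₂ = (1−α)u₁²∂₁ − (1+α)u₁u₂∂₂`. -/
def pt2 (α u₁ u₂ : ℝ) (g : ℝ × ℝ → ℝ) (x : ℝ × ℝ) : ℝ :=
  (1 - α) * u₁ ^ 2 * fderiv ℝ g x (1, 0) - (1 + α) * u₁ * u₂ * fderiv ℝ g x (0, 1)

/-- Longitudinal V-line transform with weight `α` and constant branch directions. -/
def Lc (α : ℝ) (u v : ℝ × ℝ) (f : ℝ × ℝ → ℝ × ℝ) (x : ℝ × ℝ) : ℝ :=
  (- ∫ t in Set.Ioi (0 : ℝ), dot u (f (x + t • u))) +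
    α * ∫ t in Set.Ioi (0 : ℝ), dot v (f (x + t • v))

/-- Transverse V-line transform with weight `α` and constant branch directions. -/
def Tc (α : ℝ) (u v : ℝ × ℝ) (f : ℝ × ℝ → ℝ × ℝ) (x : ℝ × ℝ) : ℝ :=
  (- ∫ t in Set.Ioi (0 : ℝ), dot (perp u) (f (x + t • u))) +
    α * ∫ t in Set.Ioi (0 : ℝ), dot (perp v) (f (x + t • v))

section RayIntegral

variable {E F : Type*} [NormedAddCommGroup E] [NormedSpace ℝ E]

theorem HasCompactSupport.comp_add_smul [Zero F] {g : E → F} (hg : HasCompactSupport g) {w : E}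
    (hw : w ≠ 0) (x : E) : HasCompactSupport fun t : ℝ => g (x + t • w) :=
  (hg.comp_homeomorph (Homeomorph.addLeft x)).comp_isClosedEmbedding
    (isClosedEmbedding_smul_left hw)

theorem HasCompactSupport.exists_forall_add_smul_eq_zero [Zero F] {g : E → F}
    (hg : HasCompactSupport g) {w : E} (hw : w ≠ 0) (x : E) (r : ℝ) :
    ∃ M, ∀ y ∈ closedBall x r, ∀ t : ℝ, M < |t| → g (y + t • w) = 0 := by
  obtain ⟨R, hR⟩ := hg.isBounded.subset_closedBall x
  refine ⟨(R + r) / ‖w‖, fun y hy t ht => image_eq_zero_of_notMem_tsupport fun hmem => ?_⟩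
  refine ht.not_ge ?_
  rw [le_div_iff₀ (norm_pos_iff.2 hw), ← Real.norm_eq_abs, ← norm_smul]
  calc ‖t • w‖ = ‖(y + t • w - x) - (y - x)‖ := by congr 1; abel
    _ ≤ ‖y + t • w - x‖ + ‖y - x‖ := norm_sub_le _ _
    _ ≤ R + r := add_le_add (mem_closedBall_iff_norm.1 (hR hmem)) (mem_closedBall_iff_norm.1 hy)

variable [NormedAddCommGroup F] {g : E → F} {w : E}

theorem integrableOn_Ioi_comp_add_smul (hg : Continuous g) (hcs : HasCompactSupport g)
    (hw : w ≠ 0) (x : E) : IntegrableOn (fun t : ℝ => g (x + t • w)) (Ioi 0) :=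
  (hg.comp (by fun_prop)).integrable_of_hasCompactSupport (hcs.comp_add_smul hw x) |>.integrableOn

variable [NormedSpace ℝ F]

def rayIntegral (w : E) (g : E → F) (x : E) : F := ∫ t in Ioi (0 : ℝ), g (x + t • w)

theorem hasFDerivAt_rayIntegral (hg : ContDiff ℝ 1 g) (hcs : HasCompactSupport g) (hw : w ≠ 0)
    (x : E) :
    HasFDerivAt (rayIntegral w g) (∫ t in Ioi (0 : ℝ), fderiv ℝ g (x + t • w)) x := by
  have hg' : Continuous (fderiv ℝ g) := hg.continuous_fderiv one_ne_zero
  obtain ⟨C, hC⟩ := hcs.fderiv (𝕜 := ℝ) |>.exists_bound_of_continuous hg'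
  obtain ⟨M, hM⟩ := hcs.fderiv (𝕜 := ℝ) |>.exists_forall_add_smul_eq_zero hw x 1
  have hbound : ∀ t : ℝ, ∀ y ∈ ball x 1,
      ‖fderiv ℝ g (y + t • w)‖ ≤ (Icc (-M) M).indicator (fun _ => C) t := by
    intro t y hy
    by_cases ht : t ∈ Icc (-M) M
    · rw [indicator_of_mem ht]; exact hC _
    · rw [indicator_of_notMem ht,
        hM y (ball_subset_closedBall hy) t (not_le.1 fun h => ht (abs_le.1 h)), norm_zero]
  refine hasFDerivAt_integral_of_dominated_of_fderiv_le (μ := volume.restrict (Ioi 0))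
    (F := fun y t => g (y + t • w)) (ball_mem_nhds x one_pos)
    (.of_forall fun y => (hg.continuous.comp (by fun_prop)).aestronglyMeasurable)
    (integrableOn_Ioi_comp_add_smul hg.continuous hcs hw x)
    (hg'.comp (by fun_prop)).aestronglyMeasurable (.of_forall hbound) ?_
    (.of_forall fun t y _ => ?_)
  · exact (integrableOn_const (C := C) measure_Icc_lt_top.ne).integrable_indicator
      measurableSet_Icc |>.restrict
  · exact (hg.differentiable one_ne_zero _).hasFDerivAt.comp y ((hasFDerivAt_id y).add_const _)

theorem differentiable_rayIntegral (hg : ContDiff ℝ 1 g) (hcs : HasCompactSupport g)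
    (hw : w ≠ 0) : Differentiable ℝ (rayIntegral w g) :=
  fun x => (hasFDerivAt_rayIntegral hg hcs hw x).differentiableAt

theorem fderiv_rayIntegral_apply (hg : ContDiff ℝ 1 g) (hcs : HasCompactSupport g) (hw : w ≠ 0)
    (x z : E) : fderiv ℝ (rayIntegral w g) x z = rayIntegral w (fun y => fderiv ℝ g y z) x := by
  rw [(hasFDerivAt_rayIntegral hg hcs hw x).fderiv, rayIntegral,
    ContinuousLinearMap.integral_apply]
  exact integrableOn_Ioi_comp_add_smul (hg.continuous_fderiv one_ne_zero) (hcs.fderiv (𝕜 := ℝ))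
    hw x

theorem rayIntegral_fderiv_apply_self [CompleteSpace F] (hg : ContDiff ℝ 1 g)
    (hcs : HasCompactSupport g) (hw : w ≠ 0) (x : E) :
    rayIntegral w (fun y => fderiv ℝ g y w) x = -g x := by
  have hderiv : ∀ t ∈ Ici (0 : ℝ),
      HasDerivAt (fun s : ℝ => g (x + s • w)) (fderiv ℝ g (x + t • w) w) t := fun t _ =>
    (hg.differentiable one_ne_zero _).hasFDerivAt.comp_hasDerivAt t
      (((hasDerivAt_id t).smul_const w).const_add x |>.congr_deriv (one_smul ℝ w))
  have hlim : Tendsto (fun t : ℝ => g (x + t • w)) atTop (𝓝 0) :=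
    (hcs.comp_add_smul hw x).is_zero_at_infty.mono_left atTop_le_cocompact
  simpa [rayIntegral] using integral_Ioi_of_hasDerivAt_of_tendsto' hderiv
    (integrableOn_Ioi_comp_add_smul ((hg.continuous_fderiv one_ne_zero).clm_apply
      continuous_const) (hcs.fderiv_apply (𝕜 := ℝ) w) hw x) hlim

theorem fderiv_rayIntegral_apply_self [CompleteSpace F] (hg : ContDiff ℝ 1 g)
    (hcs : HasCompactSupport g) (hw : w ≠ 0) (x : E) : fderiv ℝ (rayIntegral w g) x w = -g x := by
  rw [fderiv_rayIntegral_apply hg hcs hw, rayIntegral_fderiv_apply_self hg hcs hw]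

end RayIntegral

section TransverseVLine

variable {f : ℝ × ℝ → ℝ × ℝ}

theorem ContDiff.dot_left {n : WithTop ℕ∞} (hf : ContDiff ℝ n f) (p : ℝ × ℝ) :
    ContDiff ℝ n fun y => dot p (f y) := by
  unfold dot; fun_prop

theorem HasCompactSupport.dot_left (hf : HasCompactSupport f) (p : ℝ × ℝ) :
    HasCompactSupport fun y => dot p (f y) :=
  hf.comp_left (g := dot p) (by simp [dot])

theorem Dc_eq_partials (w : ℝ × ℝ) (g : ℝ × ℝ → ℝ) (x : ℝ × ℝ) :
    Dc w g x = w.1 * fderiv ℝ g x (1, 0) + w.2 * fderiv ℝ g x (0, 1) := by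
  conv_lhs => rw [show w = w.1 • ((1 : ℝ), (0 : ℝ)) + w.2 • ((0 : ℝ), (1 : ℝ)) by ext <;> simp]
  simp only [Dc, map_add, map_smul, smul_eq_mul]

theorem Dc_dot_left {x : ℝ × ℝ} (hf : DifferentiableAt ℝ f x) (p w : ℝ × ℝ) :
    Dc w (fun y => dot p (f y)) x =
      p.1 * Dc w (fun y => (f y).1) x + p.2 * Dc w (fun y => (f y).2) x := by
  unfold Dc dot
  rw [fderiv_fun_add (hf.fst.const_mul _) (hf.snd.const_mul _), fderiv_const_mul hf.fst,
    fderiv_const_mul hf.snd]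
  rfl

theorem Dc_Dc_neg_rayIntegral_add_const_mul (α : ℝ) {u v : ℝ × ℝ} (hu : u ≠ 0) (hv : v ≠ 0)
    {a b : ℝ × ℝ → ℝ} (ha : ContDiff ℝ 2 a) (hb : ContDiff ℝ 1 b) (hacs : HasCompactSupport a)
    (hbcs : HasCompactSupport b) (x : ℝ × ℝ) :
    Dc u (Dc v fun z => -rayIntegral u a z + α * rayIntegral v b z) x =
      Dc v a x - α * Dc u b x := by
  have ha₁ : ContDiff ℝ 1 a := ha.of_le one_le_two
  have hDva : ContDiff ℝ 1 (Dc v a) := (ha.fderiv_right (m := 1) le_rfl).clm_apply contDiff_const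
  have hDvacs : HasCompactSupport (Dc v a) := hacs.fderiv_apply (𝕜 := ℝ) v
  have hDv : (Dc v fun z => -rayIntegral u a z + α * rayIntegral v b z) =
      fun z => -rayIntegral u (Dc v a) z - α * b z := by
    funext z
    rw [Dc, fderiv_fun_add (differentiable_rayIntegral ha₁ hacs hu z).fun_neg
      ((differentiable_rayIntegral hb hbcs hv z).const_mul α), fderiv_fun_neg,
      fderiv_const_mul (differentiable_rayIntegral hb hbcs hv z)]
    simp only [add_apply, neg_apply, smul_apply, smul_eq_mul, fderiv_rayIntegral_apply ha₁ hacs hu,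
      fderiv_rayIntegral_apply_self hb hbcs hv, mul_neg, ← sub_eq_add_neg]
    rfl
  rw [hDv, Dc, fderiv_fun_sub (differentiable_rayIntegral hDva hDvacs hu x).fun_neg
      ((hb.differentiable one_ne_zero x).const_mul α), fderiv_fun_neg,
    fderiv_const_mul (hb.differentiable one_ne_zero x)]
  simp only [sub_apply, neg_apply, smul_apply, smul_eq_mul,
    fderiv_rayIntegral_apply_self hDva hDvacs hu, neg_neg]
  rfl

theorem Dc_Dc_Tc (α : ℝ) {u v : ℝ × ℝ} (hu : u ≠ 0) (hv : v ≠ 0) (hf : ContDiff ℝ 2 f)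
    (hcs : HasCompactSupport f) (x : ℝ × ℝ) :
    Dc u (Dc v (Tc α u v f)) x =
      Dc v (fun y => dot (perp u) (f y)) x - α * Dc u (fun y => dot (perp v) (f y)) x :=
  Dc_Dc_neg_rayIntegral_add_const_mul α hu hv (hf.dot_left _)
    ((hf.dot_left _).of_le one_le_two) (hcs.dot_left _) (hcs.dot_left _) x

end TransverseVLine

theorem stmt14_general (α u₁ u₂ : ℝ) (hne : u₁ * u₂ ≠ 0)
    (f : ℝ × ℝ → ℝ × ℝ) (hf : ContDiff ℝ 2 f)
    (hcs : HasCompactSupport f) :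
    ∀ x, Dc (u₁, u₂) (Dc (-u₁, u₂) (Tc α (u₁, u₂) (-u₁, u₂) f)) x =
      -(pt1 α u₁ u₂ (fun y => (f y).1) x) - pt2 α u₁ u₂ (fun y => (f y).2) x := by
  intro x
  have hu₁ : u₁ ≠ 0 := left_ne_zero_of_mul hne
  have hfx : DifferentiableAt ℝ f x := hf.differentiable two_ne_zero x
  rw [Dc_Dc_Tc α (fun h => hu₁ (Prod.mk_eq_zero.1 h).1)
    (fun h => hu₁ (neg_eq_zero.1 (Prod.mk_eq_zero.1 h).1)) hf hcs x,
    Dc_dot_left hfx, Dc_dot_left hfx]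
  simp only [Dc_eq_partials, perp, pt1, pt2]
  ring

theorem stmt14 (α u₁ u₂ : ℝ) (hunit : u₁ ^ 2 + u₂ ^ 2 = 1) (hne : u₁ * u₂ ≠ 0)
    (f : ℝ × ℝ → ℝ × ℝ) (hf : ContDiff ℝ 2 f)
    (hcs : HasCompactSupport f) (hsupp : tsupport f ⊆ disc) :
    ∀ x, Dc (u₁, u₂) (Dc (-u₁, u₂) (Tc α (u₁, u₂) (-u₁, u₂) f)) x =
      -(pt1 α u₁ u₂ (fun y => (f y).1) x) - pt2 α u₁ u₂ (fun y => (f y).2) x :=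
  stmt14_general α u₁ u₂ hne f hf hcs
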